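/- Let R ⊆ [0,1]×[0,1] be a Borel set which is an almost-everywhere strict total order, and let φ(t) := Leb{x ∈ [0,1] : (x,t) ∈ R} be its rank function. Then for Lebesgue-a.e. (t,s) ∈ [0,1]² with (t,s) ∈ R, one has φ(t) < φ(s). -/

import Mathlib

open MeasureTheory Set
open scoped ENNReal

/-- Lebesgue measure on `[0,1]`. -/
noncomputable def leb01 : Measure ℝ := volume.restrict (Icc 0 1)

/-- A Borel set `R ⊆ [0,1] × [0,1]` is an almost-everywhere strict total order if for
Lebesgue-a.e. `(x,y) ∈ [0,1]²` with `x ≠ y` exactly one of `(x,y) ∈ R`, `(y,x) ∈ R` holds,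
and for Lebesgue-a.e. `(x,y,z) ∈ [0,1]³` the relation is transitive along `(x,y,z)`. -/
structure AEStrictTotalOrder (R : Set (ℝ × ℝ)) : Prop where
  measurable : MeasurableSet R
  subset : R ⊆ Icc (0:ℝ) 1 ×ˢ Icc (0:ℝ) 1
  total : ∀ᵐ p ∂(leb01.prod leb01),
    p.1 ≠ p.2 → Xor' ((p.1, p.2) ∈ R) ((p.2, p.1) ∈ R)
  trans : ∀ᵐ p ∂(leb01.prod (leb01.prod leb01)),
    (p.1, p.2.1) ∈ R → (p.2.1, p.2.2) ∈ R → (p.1, p.2.2) ∈ R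

/-- The rank function of `R`: `φ(t) = Leb {x ∈ [0,1] : (x,t) ∈ R}`. -/
noncomputable def rankFun (R : Set (ℝ × ℝ)) (t : ℝ) : ℝ :=
  (volume {x ∈ Icc (0:ℝ) 1 | (x, t) ∈ R}).toReal

namespace RankAux

/-- ENNReal-valued rank function. -/
noncomputable def Phi (R : Set (ℝ × ℝ)) (t : ℝ) : ℝ≥0∞ :=
  volume {x ∈ Icc (0:ℝ) 1 | (x, t) ∈ R}

/-- Measure of the "interval" strictly between `t` and `s`. -/
noncomputable def gap (R : Set (ℝ × ℝ)) (t s : ℝ) : ℝ≥0∞ :=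
  volume {x ∈ Icc (0:ℝ) 1 | (t, x) ∈ R ∧ (x, s) ∈ R}

variable {R : Set (ℝ × ℝ)}

lemma leb01_apply' (E : Set ℝ) : leb01 E = volume (E ∩ Icc (0:ℝ) 1) :=
  Measure.restrict_apply' measurableSet_Icc

lemma leb01_singleton (a : ℝ) : leb01 {a} = 0 :=
  le_antisymm ((Measure.restrict_le_self _).trans_eq (Real.volume_singleton)) (zero_le)

instance : IsFiniteMeasure leb01 := by
  constructor
  rw [leb01, Measure.restrict_apply_univ]
  simp [Real.volume_Icc]

lemma Phi_ne_top (R : Set (ℝ × ℝ)) (t : ℝ) : Phi R t ≠ ⊤ := by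
  have h1 : Phi R t ≤ volume (Icc (0:ℝ) 1) := measure_mono (fun x hx => hx.1)
  refine ne_top_of_le_ne_top ?_ h1
  simp [Real.volume_Icc]

lemma measurableSet_secR (hm : MeasurableSet R) (t : ℝ) :
    MeasurableSet {x : ℝ | (x, t) ∈ R} :=
  (measurable_id.prodMk measurable_const) hm

lemma measurableSet_secL (hm : MeasurableSet R) (t : ℝ) :
    MeasurableSet {x : ℝ | (t, x) ∈ R} :=
  (measurable_const.prodMk measurable_id) hm

lemma measurable_Phi (hm : MeasurableSet R) : Measurable (Phi R) := by
  have hS : MeasurableSet ((Icc (0:ℝ) 1 ×ˢ (univ : Set ℝ)) ∩ R) :=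
    (measurableSet_Icc.prod MeasurableSet.univ).inter hm
  have h := measurable_measure_prodMk_right (μ := (volume : Measure ℝ)) hS
  have h2 : Phi R = fun t => volume
      ((fun x => (x, t)) ⁻¹' ((Icc (0:ℝ) 1 ×ˢ (univ : Set ℝ)) ∩ R)) := by
    funext t
    unfold Phi
    congr 1
    ext x
    simp [Set.mem_sep_iff]
  rw [h2]
  exact h

lemma measurable_gap (hm : MeasurableSet R) (t : ℝ) : Measurable (gap R t) := by
  have hS : MeasurableSet (((Icc (0:ℝ) 1 ∩ {x : ℝ | (t, x) ∈ R}) ×ˢ (univ : Set ℝ)) ∩ R) :=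
    ((measurableSet_Icc.inter (measurableSet_secL hm t)).prod MeasurableSet.univ).inter hm
  have h := measurable_measure_prodMk_right (μ := (volume : Measure ℝ)) hS
  have h2 : gap R t = fun s => volume
      ((fun x => (x, s)) ⁻¹' (((Icc (0:ℝ) 1 ∩ {x : ℝ | (t, x) ∈ R}) ×ˢ (univ : Set ℝ)) ∩ R)) := by
    funext s
    unfold gap
    congr 1
    ext x
    simp [Set.mem_sep_iff]
    tauto
  rw [h2]
  exact h

/-- For every `t`, the set of `s` with `t R s` but empty "interval" between them is null. -/
lemma Nt_null (hR : AEStrictTotalOrder R) (t : ℝ) :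
    leb01 {s : ℝ | (t, s) ∈ R ∧ gap R t s = 0} = 0 := by
  have hm := hR.measurable
  set N : Set ℝ := {s : ℝ | (t, s) ∈ R ∧ gap R t s = 0} with hN
  have hNmeas : MeasurableSet N :=
    (measurableSet_secL hm t).inter ((measurable_gap hm t) (measurableSet_singleton 0))
  -- key: measure of sets of pairs
  set D : Set (ℝ × ℝ) := {p : ℝ × ℝ | p.1 = p.2} with hD
  set W : Set (ℝ × ℝ) :=
    {p : ℝ × ℝ | p.1 ≠ p.2 ∧ ¬ Xor' ((p.1, p.2) ∈ R) ((p.2, p.1) ∈ R)} with hW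
  set E₁ : Set (ℝ × ℝ) := {p : ℝ × ℝ | p.2 ∈ N ∧ (t, p.1) ∈ R ∧ (p.1, p.2) ∈ R} with hE₁
  set E₂ : Set (ℝ × ℝ) := {p : ℝ × ℝ | p.1 ∈ N ∧ (t, p.2) ∈ R ∧ (p.2, p.1) ∈ R} with hE₂
  have hDmeas : MeasurableSet D := measurableSet_eq_fun measurable_fst measurable_snd
  have hDnull : leb01.prod leb01 D = 0 := by
    rw [Measure.measure_prod_null hDmeas]
    filter_upwards with s
    have : Prod.mk s ⁻¹' D = {s} := by
      ext y; simp [hD, eq_comm]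
    rw [this, leb01_singleton]
    rfl
  have hWnull : leb01.prod leb01 W = 0 := by
    have := ae_iff.mp hR.total
    refine measure_mono_null ?_ this
    intro p hp
    rw [hW] at hp
    simp only [mem_setOf_eq] at hp ⊢
    intro h
    exact hp.2 (h hp.1)
  have hE₁null : leb01.prod leb01 E₁ = 0 := by
    have hE₁meas : MeasurableSet E₁ := by
      refine (MeasurableSet.inter ?_ ?_)
      · exact measurable_snd hNmeas
      refine (MeasurableSet.inter ?_ hm)
      exact measurable_fst (measurableSet_secL hm t)
    rw [Measure.prod_apply_symm hE₁meas]
    have hzero : ∀ s' : ℝ, leb01 ((fun s => (s, s')) ⁻¹' E₁) = 0 := by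
      intro s'
      by_cases hs' : s' ∈ N
      · refine measure_mono_null (t := {s : ℝ | (t, s) ∈ R ∧ (s, s') ∈ R}) ?_ ?_
        · intro s hs; exact ⟨hs.2.1, hs.2.2⟩
        · rw [leb01_apply']
          have heq : {s : ℝ | (t, s) ∈ R ∧ (s, s') ∈ R} ∩ Icc (0:ℝ) 1
              = {x ∈ Icc (0:ℝ) 1 | (t, x) ∈ R ∧ (x, s') ∈ R} := by
            ext x; simp [Set.mem_sep_iff]; tauto
          rw [heq]
          exact hs'.2
      · have : (fun s => (s, s')) ⁻¹' E₁ = ∅ := by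
          ext s; simp only [mem_preimage, hE₁, mem_setOf_eq, mem_empty_iff_false, iff_false]
          intro h; exact hs' h.1
        rw [this]; exact measure_empty
    simp only [hzero]
    simp
  have hE₂null : leb01.prod leb01 E₂ = 0 := by
    have hE₂meas : MeasurableSet E₂ := by
      refine (MeasurableSet.inter ?_ ?_)
      · exact measurable_fst hNmeas
      refine (MeasurableSet.inter ?_ ?_)
      · exact measurable_snd (measurableSet_secL hm t)
      · exact (measurable_snd.prodMk measurable_fst) hm
    rw [Measure.prod_apply hE₂meas]
    have hzero : ∀ s : ℝ, leb01 (Prod.mk s ⁻¹' E₂) = 0 := by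
      intro s
      by_cases hs : s ∈ N
      · refine measure_mono_null (t := {s' : ℝ | (t, s') ∈ R ∧ (s', s) ∈ R}) ?_ ?_
        · intro s' hs'; exact ⟨hs'.2.1, hs'.2.2⟩
        · rw [leb01_apply']
          have heq : {s' : ℝ | (t, s') ∈ R ∧ (s', s) ∈ R} ∩ Icc (0:ℝ) 1
              = {x ∈ Icc (0:ℝ) 1 | (t, x) ∈ R ∧ (x, s) ∈ R} := by
            ext x; simp [Set.mem_sep_iff]; tauto
          rw [heq]
          exact hs.2
      · have : Prod.mk s ⁻¹' E₂ = ∅ := by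
          ext s'; simp only [mem_preimage, hE₂, mem_setOf_eq, mem_empty_iff_false, iff_false]
          intro h; exact hs h.1
        rw [this]; exact measure_empty
    simp only [hzero]
    simp
  -- cover
  have hcover : N ×ˢ N ⊆ D ∪ W ∪ E₁ ∪ E₂ := by
    rintro ⟨s, s'⟩ ⟨hs, hs'⟩
    by_cases heq : s = s'
    · exact Or.inl (Or.inl (Or.inl heq))
    by_cases hxor : Xor' ((s, s') ∈ R) ((s', s) ∈ R)
    · rcases hxor with ⟨h1, -⟩ | ⟨h1, -⟩
      · exact Or.inl (Or.inr ⟨hs', hs.1, h1⟩)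
      · exact Or.inr ⟨hs, hs'.1, h1⟩
    · exact Or.inl (Or.inl (Or.inr ⟨heq, hxor⟩))
  have hprod : leb01.prod leb01 (N ×ˢ N) = 0 := by
    refine measure_mono_null hcover ?_
    refine measure_union_null (measure_union_null (measure_union_null hDnull hWnull) hE₁null) hE₂null
  rw [Measure.prod_prod] at hprod
  exact mul_self_eq_zero.mp hprod

/-- The coordinate permutation `(t,(s,x)) ↦ (x,(t,s))` preserves `leb01³`. -/
lemma mp_perm : MeasurePreserving
    (fun p : ℝ × ℝ × ℝ => (p.2.2, p.1, p.2.1))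
    (leb01.prod (leb01.prod leb01)) (leb01.prod (leb01.prod leb01)) := by
  have h1 : MeasurePreserving (Prod.swap : ℝ × (ℝ × ℝ) → (ℝ × ℝ) × ℝ)
      (leb01.prod (leb01.prod leb01)) ((leb01.prod leb01).prod leb01) :=
    Measure.measurePreserving_swap
  have h2 : MeasurePreserving (MeasurableEquiv.prodAssoc : (ℝ × ℝ) × ℝ ≃ᵐ ℝ × ℝ × ℝ)
      ((leb01.prod leb01).prod leb01) (leb01.prod (leb01.prod leb01)) :=
    measurePreserving_prodAssoc leb01 leb01 leb01
  have := (((h2.comp h1).comp h2).comp h1)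
  convert this using 1
  funext p; rfl

/-- Curried form of transitivity: for a.e. `t`, a.e. `s`, a.e. `x`,
`x R t → t R s → x R s`. -/
lemma trans_curried (hR : AEStrictTotalOrder R) :
    ∀ᵐ t ∂leb01, ∀ᵐ s ∂leb01, ∀ᵐ x ∂leb01,
      ((x, t) ∈ R → (t, s) ∈ R → (x, s) ∈ R) := by
  have h := mp_perm.quasiMeasurePreserving.ae hR.trans
  have h2 := Measure.ae_ae_of_ae_prod h
  filter_upwards [h2] with t ht
  have h3 := Measure.ae_ae_of_ae_prod ht
  filter_upwards [h3] with s hs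
  filter_upwards [hs] with x hx
  exact hx

/-- Curried form of asymmetry: for a.e. `t`, a.e. `x`, not both `x R t` and `t R x`
unless `x = t`. -/
lemma asymm_curried (hR : AEStrictTotalOrder R) :
    ∀ᵐ t ∂leb01, ∀ᵐ x ∂leb01, (x ≠ t → ¬((x, t) ∈ R ∧ (t, x) ∈ R)) := by
  have h := Measure.measurePreserving_swap.quasiMeasurePreserving.ae hR.total
  have h2 := Measure.ae_ae_of_ae_prod h
  filter_upwards [h2] with t ht
  filter_upwards [ht] with x hx
  intro hne hand
  have := hx hne
  rcases this with ⟨-, h2'⟩ | ⟨-, h2'⟩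
  · exact h2' hand.2
  · exact h2' hand.1

lemma claim1 (hR : AEStrictTotalOrder R) :
    ∀ᵐ t ∂leb01, ∀ᵐ s ∂leb01,
      ((t, s) ∈ R → Phi R t + gap R t s ≤ Phi R s) := by
  filter_upwards [trans_curried hR, asymm_curried hR] with t h1 h2
  filter_upwards [h1] with s h1s
  intro hts
  -- pass to volume-a.e. null sets on [0,1]
  set Z₁ : Set ℝ := {x : ℝ | ¬((x, t) ∈ R → (t, s) ∈ R → (x, s) ∈ R)} ∩ Icc (0:ℝ) 1 with hZ₁
  set Z₂ : Set ℝ := {x : ℝ | ¬(x ≠ t → ¬((x, t) ∈ R ∧ (t, x) ∈ R))} ∩ Icc (0:ℝ) 1 with hZ₂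
  have hZ₁null : volume Z₁ = 0 := by
    have := ae_iff.mp h1s
    rw [leb01_apply'] at this
    exact this
  have hZ₂null : volume Z₂ = 0 := by
    have := ae_iff.mp h2
    rw [leb01_apply'] at this
    exact this
  set A : Set ℝ := {x ∈ Icc (0:ℝ) 1 | (x, t) ∈ R} with hA
  set M : Set ℝ := {x ∈ Icc (0:ℝ) 1 | (t, x) ∈ R ∧ (x, s) ∈ R} with hM
  set B : Set ℝ := {x ∈ Icc (0:ℝ) 1 | (x, s) ∈ R} with hB
  have hMmeas : MeasurableSet M :=
    measurableSet_Icc.inter ((measurableSet_secL hR.measurable t).inter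
      (measurableSet_secR hR.measurable s))
  have hsub : A ∪ M ⊆ B ∪ Z₁ := by
    rintro x (⟨hx01, hxt⟩ | ⟨hx01, -, hxs⟩)
    · by_cases himp : (x, t) ∈ R → (t, s) ∈ R → (x, s) ∈ R
      · exact Or.inl ⟨hx01, himp hxt hts⟩
      · exact Or.inr ⟨himp, hx01⟩
    · exact Or.inl ⟨hx01, hxs⟩
  have hint : A ∩ M ⊆ Z₂ ∪ {t} := by
    rintro x ⟨⟨hx01, hxt⟩, ⟨-, htx, -⟩⟩
    by_cases hxe : x = t
    · exact Or.inr hxe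
    · by_cases himp : x ≠ t → ¬((x, t) ∈ R ∧ (t, x) ∈ R)
      · exact absurd ⟨hxt, htx⟩ (himp hxe)
      · exact Or.inl ⟨himp, hx01⟩
  have hintnull : volume (A ∩ M) = 0 := by
    refine measure_mono_null hint ?_
    refine measure_union_null hZ₂null (Real.volume_singleton)
  have key : volume (A ∪ M) + volume (A ∩ M) = volume A + volume M :=
    measure_union_add_inter A hMmeas
  have h5 : volume A + volume M = volume (A ∪ M) := by
    rw [← key, hintnull, add_zero]
  have h6 : volume (A ∪ M) ≤ volume B := by
    calc volume (A ∪ M) ≤ volume (B ∪ Z₁) := measure_mono hsub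
    _ ≤ volume B + volume Z₁ := measure_union_le _ _
    _ = volume B := by rw [hZ₁null, add_zero]
  calc Phi R t + gap R t s = volume A + volume M := rfl
  _ = volume (A ∪ M) := h5
  _ ≤ volume B := h6
  _ = Phi R s := rfl

end RankAux

open RankAux in
/-- If `R` is an a.e. strict total order on `[0,1]` with rank function `φ`, then for
Lebesgue-a.e. `(t,s) ∈ [0,1]²` with `(t,s) ∈ R` one has `φ(t) < φ(s)`. -/
theorem rankFun_lt_of_rel (R : Set (ℝ × ℝ)) (hR : AEStrictTotalOrder R) :
    ∀ᵐ p ∂(leb01.prod leb01), p ∈ R → rankFun R p.1 < rankFun R p.2 := by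
  have hm := hR.measurable
  have hmeasset : MeasurableSet {p : ℝ × ℝ | p ∈ R → rankFun R p.1 < rankFun R p.2} := by
    have hrank : Measurable (rankFun R) := by
      have : rankFun R = fun t => (Phi R t).toReal := rfl
      rw [this]
      exact (measurable_Phi hm).ennreal_toReal
    have h1 : MeasurableSet {p : ℝ × ℝ | rankFun R p.1 < rankFun R p.2} :=
      measurableSet_lt (hrank.comp measurable_fst) (hrank.comp measurable_snd)
    have : {p : ℝ × ℝ | p ∈ R → rankFun R p.1 < rankFun R p.2}
        = Rᶜ ∪ {p : ℝ × ℝ | rankFun R p.1 < rankFun R p.2} := by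
      ext p; simp [imp_iff_not_or]
    rw [this]
    exact hm.compl.union h1
  rw [show (∀ᵐ p ∂(leb01.prod leb01), p ∈ R → rankFun R p.1 < rankFun R p.2)
      ↔ ∀ᵐ t ∂leb01, ∀ᵐ s ∂leb01, ((t, s) ∈ R → rankFun R t < rankFun R s) from
    Measure.ae_prod_iff_ae_ae hmeasset]
  filter_upwards [claim1 hR] with t h1
  have h2 : ∀ᵐ s ∂leb01, ¬((t, s) ∈ R ∧ gap R t s = 0) := by
    have h3 := (measure_eq_zero_iff_ae_notMem (μ := leb01)).mp (Nt_null hR t)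
    filter_upwards [h3] with s hs
    exact hs
  filter_upwards [h1, h2] with s h1s h2s
  intro hts
  have hgap : gap R t s ≠ 0 := fun h => h2s ⟨hts, h⟩
  have hlt : Phi R t < Phi R s :=
    lt_of_lt_of_le (ENNReal.lt_add_right (Phi_ne_top R t) hgap) (h1s hts)
  have : rankFun R t = (Phi R t).toReal := rfl
  rw [this, show rankFun R s = (Phi R s).toReal from rfl]
  exact ENNReal.toReal_lt_toReal (Phi_ne_top R t) (Phi_ne_top R s) |>.mpr hlt
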